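/- Let {ρ_i}_{i=1}^k be density matrices on a d-dimensional complex Hilbert space with k ≥ 3, and define ρ̂_j = (1/(k−1)) ∑_{i≠j} ρ_i. If the set {ρ_i} is pairwise orthogonal, i.e. tr(ρ_j ρ_l) = 0 for all j ≠ l, then F(ρ̂_j, ρ̂_l) = (k−2)/(k−1) for all j ≠ l, where F denotes the fidelity. -/

import Mathlib

open Matrix BigOperators ComplexOrder Classical

/-- The positive semidefinite square root of a matrix (junk value `0` if the
matrix is not positive semidefinite). -/
noncomputable def psqrt {d : ℕ} (A : Matrix (Fin d) (Fin d) ℂ) :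
    Matrix (Fin d) (Fin d) ℂ :=
  if h : A.PosSemidef then
    h.1.eigenvectorUnitary.1 * diagonal ((↑) ∘ Real.sqrt ∘ h.1.eigenvalues) *
      (star h.1.eigenvectorUnitary : Matrix (Fin d) (Fin d) ℂ)
  else 0

/-- The fidelity `F(ρ,σ) = tr((√ρ σ √ρ)^{1/2})` of two positive semidefinite
matrices. -/
noncomputable def fidelity {d : ℕ} (ρ σ : Matrix (Fin d) (Fin d) ℂ) : ℝ :=
  (psqrt (psqrt ρ * σ * psqrt ρ)).trace.re

/-! Pairwise orthogonal states satisfy `√ρᵢ √ρₘ = 0` for `i ≠ m`, so mixtures of them compute like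
diagonal matrices: `√(∑ pᵢ ρᵢ) = ∑ √pᵢ √ρᵢ`, the sandwich `√σ τ √σ` of `σ = ∑ pᵢ ρᵢ` and
`τ = ∑ qᵢ ρᵢ` is `∑ pᵢ qᵢ ρᵢ²`, and the fidelity reduces to the classical fidelity
`∑ √(pᵢ qᵢ) tr ρᵢ` of the weights. The two leave-one-out mixtures both carry weight `1/(k-1)`
on exactly the `k - 2` indices other than `j` and `l`. -/

open scoped MatrixOrder

theorem sum_smul_mul_sum_smul_of_mul_eq_zero {ι S R : Type*} [Fintype ι] [CommSemiring S]
    [Semiring R] [Algebra S R] (x y : ι → S) (f g : ι → R)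
    (h : Pairwise fun i m => f i * g m = 0) :
    (∑ i, x i • f i) * (∑ i, y i • g i) = ∑ i, (x i * y i) • (f i * g i) := by
  rw [Finset.sum_mul_sum]
  refine Finset.sum_congr rfl fun i _ => ?_
  rw [Finset.sum_eq_single i (fun m _ hmi => by rw [smul_mul_smul_comm, h hmi.symm, smul_zero])
    (by simp), smul_mul_smul_comm]

namespace Matrix.PosSemidef

variable {n 𝕜 : Type*} [Fintype n] [DecidableEq n] [RCLike 𝕜] {A B : Matrix n n 𝕜}

theorem sqrt_mul_sqrt_eq_zero_of_trace_mul_eq_zero (hA : A.PosSemidef) (hB : B.PosSemidef)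
    (h : (A * B).trace = 0) : CFC.sqrt A * CFC.sqrt B = 0 := by
  -- `tr ((√B √A)ᴴ (√B √A)) = tr (√A B √A) = tr (A B) = 0`
  set a := CFC.sqrt A
  set b := CFC.sqrt B
  have ha : aᴴ = a := (CFC.sqrt_nonneg A).posSemidef.isHermitian
  have hb : bᴴ = b := (CFC.sqrt_nonneg B).posSemidef.isHermitian
  have hba : (b * a)ᴴ * (b * a) = 0 := by
    rw [← (posSemidef_conjTranspose_mul_self _).trace_eq_zero_iff, conjTranspose_mul, ha, hb,
      ← Matrix.mul_assoc, Matrix.mul_assoc a, trace_mul_cycle, CFC.sqrt_mul_sqrt_self A hA.nonneg,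
      CFC.sqrt_mul_sqrt_self B hB.nonneg, h]
  rw [← ha, ← hb, ← conjTranspose_mul, conjTranspose_mul_self_eq_zero.mp hba, conjTranspose_zero]

end Matrix.PosSemidef

theorem psqrt_eq_cfcSqrt {d : ℕ} {A : Matrix (Fin d) (Fin d) ℂ} (hA : A.PosSemidef) :
    psqrt A = CFC.sqrt A := by
  rw [psqrt, dif_pos hA, CFC.sqrt_eq_cfc, cfc_nnreal_eq_real _ A, hA.1.cfc_eq]
  simp only [IsHermitian.cfc, Unitary.conjStarAlgAut_apply]
  congr 3
  funext i
  simp [Real.coe_sqrt, Real.coe_toNNReal', max_eq_left (hA.eigenvalues_nonneg i)]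

theorem psqrt_eq_of_mul_self_eq {d : ℕ} {A B : Matrix (Fin d) (Fin d) ℂ} (hB : B.PosSemidef)
    (h : B * B = A) : psqrt A = B := by
  have hA : A.PosSemidef := by
    simpa only [hB.isHermitian.eq, h] using posSemidef_conjTranspose_mul_self B
  rw [psqrt_eq_cfcSqrt hA, CFC.sqrt_eq_iff A B hA.nonneg hB.nonneg, h]

theorem psqrt_sum_smul_mul_self {d : ℕ} {ι : Type*} [Fintype ι]
    (b : ι → Matrix (Fin d) (Fin d) ℂ) (hb : ∀ i, (b i).PosSemidef)
    (horth : Pairwise fun i m => b i * b m = 0) (w : ι → ℝ) (hw : ∀ i, 0 ≤ w i) :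
    psqrt (∑ i, (w i : ℂ) • (b i * b i)) = ∑ i, (√(w i) : ℂ) • b i := by
  refine psqrt_eq_of_mul_self_eq ?_ ?_
  · exact Finset.sum_induction _ _ (fun _ _ => PosSemidef.add) .zero fun i _ =>
      (hb i).smul (Complex.zero_le_real.mpr (Real.sqrt_nonneg _))
  · rw [sum_smul_mul_sum_smul_of_mul_eq_zero _ _ _ _ horth]
    simp_rw [← Complex.ofReal_mul, Real.mul_self_sqrt (hw _)]

theorem fidelity_sum_smul_of_trace_mul_eq_zero {d : ℕ} {ι : Type*} [Fintype ι]
    (ρ : ι → Matrix (Fin d) (Fin d) ℂ) (hρ : ∀ i, (ρ i).PosSemidef)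
    (horth : Pairwise fun i m => (ρ i * ρ m).trace = 0) (p q : ι → ℝ)
    (hp : ∀ i, 0 ≤ p i) (hq : ∀ i, 0 ≤ q i) :
    fidelity (∑ i, (p i : ℂ) • ρ i) (∑ i, (q i : ℂ) • ρ i) =
      ∑ i, √(p i * q i) * (ρ i).trace.re := by
  set a : ι → Matrix (Fin d) (Fin d) ℂ := fun i => CFC.sqrt (ρ i)
  have ha : ∀ i, (a i).PosSemidef := fun i => (CFC.sqrt_nonneg (ρ i)).posSemidef
  have haa : ∀ i, a i * a i = ρ i := fun i => CFC.sqrt_mul_sqrt_self (ρ i) (hρ i).nonneg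
  have hortha : Pairwise fun i m => a i * a m = 0 := fun i m hne =>
    (hρ i).sqrt_mul_sqrt_eq_zero_of_trace_mul_eq_zero (hρ m) (horth hne)
  have horthρ : Pairwise fun i m => ρ i * ρ m = 0 := fun i m hne => by
    dsimp only
    rw [← haa i, ← haa m, Matrix.mul_assoc, ← Matrix.mul_assoc (a i) (a m), hortha hne,
      Matrix.zero_mul, Matrix.mul_zero]
  have hsqrt_left : psqrt (∑ i, (p i : ℂ) • ρ i) = ∑ i, (√(p i) : ℂ) • a i := by
    simpa only [haa] using psqrt_sum_smul_mul_self a ha hortha p hp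
  have hinner : (∑ i, (√(p i) : ℂ) • a i) * (∑ i, (q i : ℂ) • ρ i) * ∑ i, (√(p i) : ℂ) • a i =
      ∑ i, ((p i * q i : ℝ) : ℂ) • (ρ i * ρ i) := by
    rw [sum_smul_mul_sum_smul_of_mul_eq_zero _ _ _ _ fun i m hne => by
        dsimp only
        rw [← haa m, ← Matrix.mul_assoc, hortha hne, Matrix.zero_mul],
      sum_smul_mul_sum_smul_of_mul_eq_zero _ _ _ _ fun i m hne => by
        dsimp only
        rw [← haa i, Matrix.mul_assoc, Matrix.mul_assoc, hortha hne, Matrix.mul_zero,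
          Matrix.mul_zero]]
    refine Finset.sum_congr rfl fun i _ => ?_
    have hw : (√(p i) : ℂ) * q i * √(p i) = (p i * q i : ℝ) := by
      rw [mul_right_comm, ← Complex.ofReal_mul, Real.mul_self_sqrt (hp i), Complex.ofReal_mul]
    rw [hw, ← haa i]
    simp only [Matrix.mul_assoc]
  rw [fidelity, hsqrt_left, hinner,
    psqrt_sum_smul_mul_self ρ hρ horthρ _ fun i => mul_nonneg (hp i) (hq i), trace_sum,
    Complex.re_sum]
  simp only [trace_smul, smul_eq_mul, Complex.re_ofReal_mul]

theorem sum_sqrt_mul_ite_eq {ι : Type*} [Fintype ι] [DecidableEq ι] {j l : ι} (hjl : j ≠ l)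
    {c : ℝ} (hc : 0 ≤ c) :
    ∑ i, √((if i = j then 0 else c) * if i = l then 0 else c) = (Fintype.card ι - 2 : ℝ) * c := by
  have hterm : ∀ i, √((if i = j then 0 else c) * if i = l then 0 else c) =
      if i ∈ ({j, l} : Finset ι) then 0 else c := fun i => by
    by_cases hij : i = j <;> by_cases hil : i = l <;> simp [hij, hil, Real.sqrt_mul_self hc]
  simp_rw [hterm, Finset.sum_ite, Finset.sum_const_zero, zero_add, Finset.sum_const,
    Finset.filter_notMem_eq_sdiff, ← Finset.compl_eq_univ_sdiff, Finset.card_compl, nsmul_eq_mul,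
    Nat.cast_sub (Finset.card_le_univ _), Finset.card_pair hjl]
  norm_num

theorem fidelity_of_leave_one_out_of_orthogonal_general
    {d k : ℕ} (ρ : Fin k → Matrix (Fin d) (Fin d) ℂ)
    (hρ : ∀ i, (ρ i).PosSemidef) (hρtr : ∀ i, (ρ i).trace = 1)
    (ρhat : Fin k → Matrix (Fin d) (Fin d) ℂ)
    (hρhat : ∀ j, ρhat j = ((k : ℂ) - 1)⁻¹ • ∑ i ∈ Finset.univ \ {j}, ρ i)
    (horth : ∀ j l, j ≠ l → (ρ j * ρ l).trace = 0) :
    ∀ j l, j ≠ l → fidelity (ρhat j) (ρhat l) = ((k : ℝ) - 2) / ((k : ℝ) - 1) := by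
  intro j l hjl
  set c : ℝ := ((k : ℝ) - 1)⁻¹
  have hc : 0 ≤ c := inv_nonneg.mpr (sub_nonneg.mpr (Nat.one_le_cast.mpr j.pos))
  have hmix : ∀ j, ρhat j = ∑ i, ((if i = j then 0 else c : ℝ) : ℂ) • ρ i := fun j => by
    simp only [hρhat j, Finset.sdiff_singleton_eq_erase, Finset.smul_sum, apply_ite ((↑) : ℝ → ℂ),
      ite_smul, Complex.ofReal_zero, zero_smul, Finset.sum_ite, Finset.sum_const_zero, zero_add,
      Finset.filter_ne', c]
    push_cast
    rfl
  rw [hmix j, hmix l, fidelity_sum_smul_of_trace_mul_eq_zero ρ hρ horth _ _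
    (fun i => by positivity) (fun i => by positivity)]
  simp only [hρtr, Complex.one_re, mul_one]
  rw [sum_sqrt_mul_ite_eq hjl hc, Fintype.card_fin, div_eq_mul_inv]

/-- If the density matrices `ρᵢ` are pairwise orthogonal, then the uniform
mixtures `ρ̂ⱼ = (1/(k-1)) ∑_{i≠j} ρᵢ` satisfy `F(ρ̂ⱼ, ρ̂ₗ) = (k-2)/(k-1)`
for all `j ≠ l`. -/
theorem fidelity_of_leave_one_out_of_orthogonal
    {d k : ℕ} (hk : 3 ≤ k) (ρ : Fin k → Matrix (Fin d) (Fin d) ℂ)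
    (hρ : ∀ i, (ρ i).PosSemidef) (hρtr : ∀ i, (ρ i).trace = 1)
    (ρhat : Fin k → Matrix (Fin d) (Fin d) ℂ)
    (hρhat : ∀ j, ρhat j = ((k : ℂ) - 1)⁻¹ • ∑ i ∈ Finset.univ \ {j}, ρ i)
    (horth : ∀ j l, j ≠ l → (ρ j * ρ l).trace = 0) :
    ∀ j l, j ≠ l → fidelity (ρhat j) (ρhat l) = ((k : ℝ) - 2) / ((k : ℝ) - 1) :=
  fidelity_of_leave_one_out_of_orthogonal_general ρ hρ hρtr ρhat hρhat horth
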